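/- arXiv:0712.3396 — 2 statements merged into one kernel-verified Lean document; each statement's English description precedes it below -/
import Mathlib

section
/- Let Q be a measurable set of finite measure in ℝ^N, p ∈ [1,∞), and (z_k) a sequence of non-negative functions in L_p(Q). Suppose there exists a sequence (Z_j) in L_p(Q) such that for every j ≥ 1, ‖(z_k − 1/j)₊ − Z_j‖_{L_p} → 0 as k → ∞. Then (z_k) converges in L_p(Q). -/
/-!
The truncations `(z k - 1/j)₊` are within `|Q|^{1/p} / j` of `z k` in `L_p(Q)`, uniformly in `k`,
because `0 ≤ z k`. So `(z k)` is a uniform limit, as `j → ∞`, of the sequences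
`k ↦ (z k - 1/j)₊`, each of which converges in `L_p`, hence is Cauchy. A uniform limit of Cauchy
sequences is Cauchy, and `L_p` is complete.
-/

open MeasureTheory Filter Topology

theorem TendstoUniformly.cauchySeq {α ι : Type*} [UniformSpace α] {l : Filter ι} [l.NeBot]
    {G : ι → ℕ → α} {F : ℕ → α} (hGF : TendstoUniformly G F l) (hG : ∀ j, CauchySeq (G j)) :
    CauchySeq F := by
  rw [cauchySeq_iff]
  intro U hU
  obtain ⟨V, hV, hVsymm, hVU⟩ := comp_comp_symm_mem_uniformity_sets hU
  obtain ⟨j, hj⟩ := (hGF V hV).exists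
  obtain ⟨K, hK⟩ := cauchySeq_iff.1 (hG j) V hV
  exact ⟨K, fun m hm n hn => hVU ⟨G j n, ⟨G j m, hj m, hK m hm n hn⟩, SetRel.symm V (hj n)⟩⟩

section Lp

variable {α E : Type*} [MeasurableSpace α] {μ : Measure α} [NormedAddCommGroup E] [CompleteSpace E]
  {p : ENNReal} [Fact (1 ≤ p)]

theorem exists_memLp_tendsto_eLpNorm_of_uniform_approx {ι : Type*} {l : Filter ι} [l.NeBot]
    {f : ℕ → α → E} {g : ι → ℕ → α → E} {h : ι → α → E} {δ : ι → ENNReal}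
    (hf : ∀ k, MemLp (f k) p μ) (hg : ∀ j k, MemLp (g j k) p μ) (hh : ∀ j, MemLp (h j) p μ)
    (hgh : ∀ j, Tendsto (fun k => eLpNorm (g j k - h j) p μ) atTop (𝓝 0))
    (hδ : Tendsto δ l (𝓝 0)) (hfg : ∀ j k, eLpNorm (f k - g j k) p μ ≤ δ j) :
    ∃ w, MemLp w p μ ∧ Tendsto (fun k => eLpNorm (f k - w) p μ) atTop (𝓝 0) := by
  have hG (j : ι) : CauchySeq fun k => (hg j k).toLp (g j k) :=
    ((Lp.tendsto_Lp_iff_tendsto_eLpNorm'' _ _ _ (hh j)).2 (hgh j)).cauchySeq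
  have hunif : TendstoUniformly (fun j k => (hg j k).toLp (g j k))
      (fun k => (hf k).toLp (f k)) l := by
    rw [EMetric.tendstoUniformly_iff]
    intro ε hε
    filter_upwards [hδ.eventually_lt_const hε] with j hj k
    rw [Lp.edist_toLp_toLp]
    exact (hfg j k).trans_lt hj
  obtain ⟨L, hL⟩ := cauchySeq_tendsto_of_complete (hunif.cauchySeq hG)
  rw [← Lp.toLp_coeFn L (Lp.memLp L), Lp.tendsto_Lp_iff_tendsto_eLpNorm''] at hL
  exact ⟨L, Lp.memLp L, hL⟩

end Lp

theorem abs_sub_max_sub_zero_le {a c : ℝ} (ha : 0 ≤ a) (hc : 0 ≤ c) : |a - max (a - c) 0| ≤ c := by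
  rw [abs_le]
  constructor <;> linarith [le_max_left (a - c) 0, max_le (by linarith : a - c ≤ a) ha]

section Truncation

variable {α : Type*} [MeasurableSpace α] {μ : Measure α} {p : ENNReal} {f : α → ℝ} {c : ℝ}

theorem eLpNorm_sub_max_sub_zero_le (hf : ∀ x, 0 ≤ f x) (hc : 0 ≤ c) :
    eLpNorm (fun x => f x - max (f x - c) 0) p μ ≤ μ Set.univ ^ p.toReal⁻¹ * ENNReal.ofReal c :=
  eLpNorm_le_of_ae_bound (ae_of_all _ fun x => abs_sub_max_sub_zero_le (hf x) hc)

theorem MeasureTheory.MemLp.max_sub_const_zero [IsFiniteMeasure μ] (hfp : MemLp f p μ)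
    (hf : ∀ x, 0 ≤ f x) (hc : 0 ≤ c) : MemLp (fun x => max (f x - c) 0) p μ := by
  refine hfp.of_le ?_ (ae_of_all _ fun x => ?_)
  · exact ((hfp.aestronglyMeasurable.sub aestronglyMeasurable_const).aemeasurable.max
      aemeasurable_const).aestronglyMeasurable
  · rw [Real.norm_of_nonneg (le_max_right _ _), Real.norm_of_nonneg (hf x)]
    exact max_le (by linarith) (hf x)

end Truncation

theorem stmt0_general (N : ℕ) (Q : Set (Fin N → ℝ))
    (hQfin : volume Q < ⊤)
    (p : ENNReal) (hp1 : 1 ≤ p)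
    (z : ℕ → (Fin N → ℝ) → ℝ)
    (hz : ∀ k, MemLp (z k) p (volume.restrict Q))
    (hznn : ∀ k x, 0 ≤ z k x)
    (Z : ℕ → (Fin N → ℝ) → ℝ)
    (hZ : ∀ j, MemLp (Z j) p (volume.restrict Q))
    (hconv : ∀ j : ℕ, 1 ≤ j →
      Tendsto (fun k => eLpNorm (fun x => max (z k x - 1 / (j : ℝ)) 0 - Z j x) p
        (volume.restrict Q)) atTop (nhds 0)) :
    ∃ w : (Fin N → ℝ) → ℝ, MemLp w p (volume.restrict Q) ∧
      Tendsto (fun k => eLpNorm (fun x => z k x - w x) p (volume.restrict Q))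
        atTop (nhds 0) := by
  have : Fact (1 ≤ p) := ⟨hp1⟩
  have : IsFiniteMeasure (volume.restrict Q) := isFiniteMeasure_restrict.2 hQfin.ne
  set c : ℕ → ℝ := fun j => 1 / ((j + 1 : ℕ) : ℝ)
  set C := volume.restrict Q Set.univ ^ p.toReal⁻¹
  have hc : Tendsto (fun j => C * ENNReal.ofReal (c j)) atTop (𝓝 0) := by
    have hC : C ≠ ⊤ := ENNReal.rpow_ne_top_of_nonneg (by positivity) (measure_ne_top _ _)
    have : Tendsto (fun j => ENNReal.ofReal (c j)) atTop (𝓝 0) := by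
      simpa [c] using ENNReal.tendsto_ofReal tendsto_one_div_add_atTop_nhds_zero_nat
    simpa using ENNReal.Tendsto.const_mul this (Or.inr hC)
  exact exists_memLp_tendsto_eLpNorm_of_uniform_approx hz
    (fun j k => (hz k).max_sub_const_zero (hznn k) (by positivity)) (fun j => hZ (j + 1))
    (fun j => hconv (j + 1) j.succ_pos) hc
    (fun j k => eLpNorm_sub_max_sub_zero_le (hznn k) (by positivity))

/-- If non-negative `z k ∈ L_p(Q)` and for each `j ≥ 1` the truncations `(z k − 1/j)₊`
converge in `L_p` to some `Z j`, then `(z k)` converges in `L_p(Q)`. -/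
theorem stmt0 (N : ℕ) (Q : Set (Fin N → ℝ)) (hQ : MeasurableSet Q)
    (hQfin : volume Q < ⊤)
    (p : ENNReal) (hp1 : 1 ≤ p) (hp : p ≠ ⊤)
    (z : ℕ → (Fin N → ℝ) → ℝ)
    (hz : ∀ k, MemLp (z k) p (volume.restrict Q))
    (hznn : ∀ k x, 0 ≤ z k x)
    (Z : ℕ → (Fin N → ℝ) → ℝ)
    (hZ : ∀ j, MemLp (Z j) p (volume.restrict Q))
    (hconv : ∀ j : ℕ, 1 ≤ j →
      Tendsto (fun k => eLpNorm (fun x => max (z k x - 1 / (j : ℝ)) 0 - Z j x) p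
        (volume.restrict Q)) atTop (nhds 0)) :
    ∃ w : (Fin N → ℝ) → ℝ, MemLp w p (volume.restrict Q) ∧
      Tendsto (fun k => eLpNorm (fun x => z k x - w x) p (volume.restrict Q))
        atTop (nhds 0) :=
  stmt0_general N Q hQfin p hp1 z hz hznn Z hZ hconv
end

section
/- Let a₀ ≥ 0 and τ > 0, and let λ(r) := 1_{(a₀,∞)}(r) e^{r/τ}. Then for any two non-negative real numbers s ≤ t with t ≤ 1, ∫₀^s |λ(t − r) − λ(s − r)| dr ≤ (1 + τ^{-2}) e^{1/τ} (t − s). -/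
open MeasureTheory intervalIntegral

/-- With `λ(r) = 1_{(a₀,∞)}(r) e^{r/τ}`, for `0 ≤ s ≤ t ≤ 1` one has
`∫₀^s |λ(t − r) − λ(s − r)| dr ≤ (1 + τ⁻²) e^{1/τ} (t − s)`. -/
theorem stmt3 (a₀ τ s t : ℝ) (ha₀ : 0 ≤ a₀) (hτ : 0 < τ)
    (hs : 0 ≤ s) (hst : s ≤ t) (ht : t ≤ 1) :
    (∫ r in (0:ℝ)..s,
        |(if a₀ < t - r then Real.exp ((t - r) / τ) else 0)
          - (if a₀ < s - r then Real.exp ((s - r) / τ) else 0)|)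
      ≤ (1 + τ⁻¹ ^ 2) * Real.exp (1 / τ) * (t - s) := by
  set L : ℝ → ℝ := fun u => if a₀ < u then Real.exp (u / τ) else 0 with hLdef
  -- monotonicity
  have hmono : Monotone L := by
    intro x y hxy
    simp only [hLdef]
    by_cases hx : a₀ < x
    · rw [if_pos hx, if_pos (lt_of_lt_of_le hx hxy)]
      exact Real.exp_le_exp.2 (div_le_div_of_nonneg_right hxy hτ.le)
    · rw [if_neg hx]
      by_cases hy : a₀ < y
      · rw [if_pos hy]; positivity
      · rw [if_neg hy]
  have hLnonneg : ∀ u, 0 ≤ L u := by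
    intro u; simp only [hLdef]; split <;> positivity
  -- integrability of L on any interval
  have hLint : ∀ a b : ℝ, IntervalIntegrable L volume a b := by
    intro a b
    have : L = (Set.Ioi a₀).indicator (fun u => Real.exp (u / τ)) := by
      funext u; simp [hLdef, Set.indicator_apply]
    rw [this, intervalIntegrable_iff]
    exact (Continuous.integrableOn_uIoc (by continuity)).indicator measurableSet_Ioi
  have h1 : IntervalIntegrable (fun r => L (t - r)) volume 0 s := by
    have := (hLint (t - 0) (t - s)).comp_sub_left t
    simpa using this
  have h2 : IntervalIntegrable (fun r => L (s - r)) volume 0 s := by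
    have := (hLint (s - 0) (s - s)).comp_sub_left s
    simpa using this
  have habs : ∀ r : ℝ, |L (t - r) - L (s - r)| = L (t - r) - L (s - r) := by
    intro r
    exact abs_of_nonneg (sub_nonneg.2 (hmono (by linarith)))
  have key : (∫ r in (0:ℝ)..s, |L (t - r) - L (s - r)|)
      = (∫ u in (t-s)..t, L u) - (∫ u in (0:ℝ)..s, L u) := by
    simp_rw [habs]
    rw [integral_sub h1 h2, integral_comp_sub_left L t, integral_comp_sub_left L s]
    norm_num
  calc (∫ r in (0:ℝ)..s, |L (t - r) - L (s - r)|)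
      = (∫ u in (t-s)..t, L u) - (∫ u in (0:ℝ)..s, L u) := key
    _ = (∫ u in s..t, L u) - (∫ u in (0:ℝ)..(t-s), L u) := by
        have e1 : (∫ u in (t-s)..s, L u) + (∫ u in s..t, L u) = ∫ u in (t-s)..t, L u :=
          integral_add_adjacent_intervals (hLint _ _) (hLint _ _)
        have e2 : (∫ u in (0:ℝ)..(t-s), L u) + (∫ u in (t-s)..s, L u) = ∫ u in (0:ℝ)..s, L u :=
          integral_add_adjacent_intervals (hLint _ _) (hLint _ _)
        linarith
    _ ≤ (∫ u in s..t, L u) := by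
        have : 0 ≤ ∫ u in (0:ℝ)..(t-s), L u :=
          integral_nonneg (by linarith) (fun u _ => hLnonneg u)
        linarith
    _ ≤ (∫ u in s..t, Real.exp (1 / τ)) := by
        apply integral_mono_on hst (hLint s t) (intervalIntegrable_const)
        intro x hx
        simp only [hLdef]
        split
        · exact Real.exp_le_exp.2 (div_le_div_of_nonneg_right (le_trans hx.2 ht) hτ.le)
        · positivity
    _ = Real.exp (1 / τ) * (t - s) := by rw [intervalIntegral.integral_const]; rw [smul_eq_mul]; ring
    _ ≤ (1 + τ⁻¹ ^ 2) * Real.exp (1 / τ) * (t - s) := by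
        have h1 : (0:ℝ) < Real.exp (1/τ) := Real.exp_pos _
        nlinarith [mul_nonneg (mul_nonneg (sq_nonneg τ⁻¹) h1.le) (sub_nonneg.2 hst)]
end
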